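/- If X ~ t_k(0, I_d) with k > 2, then for every continuously differentiable g : ℝ^d → ℝ such that (1+|x|²)^{-(k+d-2)/2} g(x) → 0 at infinity and the relevant integrals are finite, E[(X Xᵀ + k I_d) ∇g(X)] = (k-1) E[X g(X)]. -/

import Mathlib

open MeasureTheory Real Matrix Filter

/-- The gradient of `f : ℝ^d → ℝ` at `x`, as the vector of partial derivatives. -/
noncomputable def grad {d : ℕ} (f : (Fin d → ℝ) → ℝ) (x : Fin d → ℝ) : Fin d → ℝ :=
  fun i => fderiv ℝ f x (Pi.single i 1)

/-- The centered scaled multivariate Student-t density with `k` degrees of freedom. -/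
noncomputable def studentDensity₀ (d : ℕ) (k : ℝ) (x : Fin d → ℝ) : ℝ :=
  (Real.Gamma ((k + d) / 2) /
      (Real.Gamma (k / 2) * k ^ ((d : ℝ) / 2) * π ^ ((d : ℝ) / 2))) *
    (1 + dotProduct x x / k) ^ (-((k + d) / 2))

/-!
Write `A(x) = x xᵀ + k I` and `p` for the density. For each `i` the identity is the integral of a
divergence: `∑ⱼ ∂ⱼ (A_ij g p) = (A ∇g)_i p + (1 - k) x_i g p`, because the rows of `A` have
divergence `(d + 1) x_i`, while `∇p = -(k + d) / (k + |x|²) p x` and `A x = (|x|² + k) x` give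
`A ∇p = -(k + d) p x`.

The integral of a divergence vanishes as soon as the divergence is integrable and
`x_j F_j / (1 + |x|²)` is integrable for every `j`: multiply by the cutoff `θ(2 - |x|²/R)`,
integrate by parts, and let `R → ∞` by dominated convergence, the gradient of the cutoff being
`O(|x_j| / (1 + |x|²))` uniformly in `R ≥ 1`. Since `|A_ij| ≤ (1 + k)(1 + |x|²)`, the field
`F_j = A_ij g p` qualifies because every `x_j g p` is integrable.
-/

noncomputable section

section GradCalculus

variable {d : ℕ}

def divergence (F : Fin d → (Fin d → ℝ) → ℝ) (x : Fin d → ℝ) : ℝ := ∑ j, grad (F j) x j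

lemma grad_mul {a b : (Fin d → ℝ) → ℝ} {x : Fin d → ℝ} (ha : DifferentiableAt ℝ a x)
    (hb : DifferentiableAt ℝ b x) :
    grad (fun y => a y * b y) x = a x • grad b x + b x • grad a x := by
  ext j
  simp [grad, fderiv_fun_mul ha hb]

lemma ContDiff.continuous_grad_apply {f : (Fin d → ℝ) → ℝ} (hf : ContDiff ℝ 1 f) (j : Fin d) :
    Continuous fun x => grad f x j :=
  (hf.continuous_fderiv one_ne_zero).clm_apply continuous_const

lemma dotProduct_self_nonneg (x : Fin d → ℝ) : 0 ≤ x ⬝ᵥ x :=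
  Finset.sum_nonneg fun j _ => mul_self_nonneg (x j)

lemma sq_le_dotProduct_self (x : Fin d → ℝ) (j : Fin d) : x j ^ 2 ≤ x ⬝ᵥ x := by
  simpa [dotProduct, sq] using
    Finset.single_le_sum (f := fun j => x j * x j) (fun l _ => mul_self_nonneg (x l))
      (Finset.mem_univ j)

lemma contDiff_dotProduct_self {n : WithTop ℕ∞} :
    ContDiff ℝ n fun y : Fin d → ℝ => y ⬝ᵥ y := by
  unfold dotProduct
  fun_prop

lemma grad_dotProduct_self (x : Fin d → ℝ) : grad (fun y => y ⬝ᵥ y) x = 2 • x := by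
  ext j
  have hsq (i : Fin d) : fderiv ℝ (fun y : Fin d → ℝ => y i * y i) x (Pi.single j 1)
      = 2 * x i * Pi.single (M := fun _ => ℝ) j 1 i := by
    rw [fderiv_fun_mul (differentiableAt_apply i x) (differentiableAt_apply i x),
      (hasFDerivAt_apply i x).fderiv]
    simp only [_root_.add_apply, _root_.smul_apply, ContinuousLinearMap.proj_apply, smul_eq_mul]
    ring
  simp only [grad, dotProduct]
  rw [fderiv_fun_sum (fun i _ => by fun_prop)]
  simp [hsq, Pi.single_apply]

lemma grad_radial {φ : ℝ → ℝ} {φ' : ℝ} {x : Fin d → ℝ} (hφ : HasDerivAt φ φ' (x ⬝ᵥ x)) :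
    grad (fun y => φ (y ⬝ᵥ y)) x = (2 * φ') • x := by
  have hdot : HasFDerivAt (fun y : Fin d → ℝ => y ⬝ᵥ y) _ x :=
    ((contDiff_dotProduct_self (n := 1)).differentiable one_ne_zero x).hasFDerivAt
  have hcomp := HasDerivAt.comp_hasFDerivAt (f := fun y : Fin d → ℝ => y ⬝ᵥ y) x hφ hdot
  ext j
  have h := congrFun (grad_dotProduct_self x) j
  simp only [grad] at h ⊢
  rw [show (fun y => φ (y ⬝ᵥ y)) = φ ∘ fun y => y ⬝ᵥ y from rfl, hcomp.fderiv]
  simp only [_root_.smul_apply, h, Pi.smul_apply, nsmul_eq_mul, Nat.cast_ofNat, smul_eq_mul]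
  ring

end GradCalculus

section Cutoff

variable {d : ℕ} {R : ℝ}

lemma deriv_smoothTransition_eq_zero {t : ℝ} (ht : t ∉ Set.Icc (0 : ℝ) 1) :
    deriv smoothTransition t = 0 := by
  rcases not_and_or.mp ht with ht | ht
  · have h : smoothTransition =ᶠ[nhds t] fun _ => 0 := by
      filter_upwards [Iio_mem_nhds (not_le.mp ht)] with s hs
      exact smoothTransition.zero_of_nonpos hs.le
    rw [h.deriv_eq, deriv_const]
  · have h : smoothTransition =ᶠ[nhds t] fun _ => 1 := by
      filter_upwards [Ioi_mem_nhds (not_le.mp ht)] with s hs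
      exact smoothTransition.one_of_one_le hs.le
    rw [h.deriv_eq, deriv_const]

def radialCutoff (R : ℝ) (x : Fin d → ℝ) : ℝ := smoothTransition (2 - x ⬝ᵥ x / R)

lemma contDiff_radialCutoff (R : ℝ) : ContDiff ℝ 1 (radialCutoff (d := d) R) :=
  smoothTransition.contDiff.comp (contDiff_const.sub (contDiff_dotProduct_self.div_const R))

lemma abs_radialCutoff_le_one (R : ℝ) (x : Fin d → ℝ) : |radialCutoff R x| ≤ 1 :=
  abs_le.mpr ⟨(neg_one_lt_zero.trans_le (smoothTransition.nonneg _)).le,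
    smoothTransition.le_one _⟩

lemma radialCutoff_eq_one (hR : 0 < R) {x : Fin d → ℝ} (hx : x ⬝ᵥ x ≤ R) :
    radialCutoff R x = 1 := by
  apply smoothTransition.one_of_one_le
  have : x ⬝ᵥ x / R ≤ 1 := (div_le_one hR).mpr hx
  linarith

lemma hasCompactSupport_radialCutoff (hR : 0 < R) :
    HasCompactSupport (radialCutoff (d := d) R) := by
  refine HasCompactSupport.intro (isCompact_closedBall 0 (√(2 * R))) fun x hx => ?_
  apply smoothTransition.zero_of_nonpos
  suffices 2 * R < x ⬝ᵥ x by
    have : 2 < x ⬝ᵥ x / R := by rwa [lt_div_iff₀ hR]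
    linarith
  by_contra! hle
  refine hx (mem_closedBall_zero_iff.mpr ((pi_norm_le_iff_of_nonneg (by positivity)).mpr
    fun j => ?_))
  rw [Real.norm_eq_abs]
  exact Real.abs_le_sqrt ((sq_le_dotProduct_self x j).trans hle)

lemma grad_radialCutoff (R : ℝ) (x : Fin d → ℝ) :
    grad (radialCutoff R) x = (-(2 / R) * deriv smoothTransition (2 - x ⬝ᵥ x / R)) • x := by
  have hθ := ((smoothTransition.contDiff (n := 1)).differentiable one_ne_zero
    (2 - x ⬝ᵥ x / R)).hasDerivAt
  have hinner : HasDerivAt (fun s => 2 - s / R) (-(1 / R)) (x ⬝ᵥ x) :=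
    ((hasDerivAt_id _).div_const R).const_sub 2
  refine (grad_radial (hθ.comp (x ⬝ᵥ x) hinner)).trans ?_
  congr 1
  ring

lemma grad_radialCutoff_eq_zero (hR : 0 < R) {x : Fin d → ℝ} (hx : x ⬝ᵥ x < R) :
    grad (radialCutoff R) x = 0 := by
  have : 1 < 2 - x ⬝ᵥ x / R := by
    have : x ⬝ᵥ x / R < 1 := (div_lt_one hR).mpr hx
    linarith
  rw [grad_radialCutoff, deriv_smoothTransition_eq_zero fun h => this.not_ge h.2]
  simp

lemma exists_abs_grad_radialCutoff_le :
    ∃ C, ∀ R, 1 ≤ R → ∀ (x : Fin d → ℝ) j,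
      |grad (radialCutoff R) x j| ≤ C * (|x j| / (1 + x ⬝ᵥ x)) := by
  obtain ⟨M, hM⟩ := isCompact_Icc.exists_bound_of_continuousOn
    ((smoothTransition.contDiff (n := 1)).continuous_deriv le_rfl).continuousOn
  have hM0 : 0 ≤ M := (norm_nonneg _).trans (hM 0 ⟨le_rfl, zero_le_one⟩)
  refine ⟨6 * M, fun R hR x j => ?_⟩
  have hR0 : 0 < R := by linarith
  have hx0 : 0 < 1 + x ⬝ᵥ x := by linarith [dotProduct_self_nonneg x]
  set t := 2 - x ⬝ᵥ x / R
  rw [grad_radialCutoff, Pi.smul_apply, smul_eq_mul, abs_mul, abs_mul, abs_neg,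
    abs_of_pos (by positivity : 0 < 2 / R)]
  by_cases ht : t ∈ Set.Icc (0 : ℝ) 1
  · -- on the annulus `R ≤ x ⬝ᵥ x ≤ 2R` where the cutoff varies, `1 + x ⬝ᵥ x ≤ 3R`
    have hRinv : 2 / R ≤ 6 / (1 + x ⬝ᵥ x) := by
      have : x ⬝ᵥ x / R ≤ 2 := by linarith [ht.1]
      rw [div_le_div_iff₀ hR0 hx0]
      linarith [(div_le_iff₀ hR0).mp this]
    calc 2 / R * |deriv smoothTransition t| * |x j| ≤ 6 / (1 + x ⬝ᵥ x) * M * |x j| := by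
          gcongr
          exact hM t ht
      _ = 6 * M * (|x j| / (1 + x ⬝ᵥ x)) := by ring
  · rw [deriv_smoothTransition_eq_zero ht, abs_zero, mul_zero, zero_mul]
    positivity

end Cutoff

lemma integral_fderiv_apply_eq_zero {E : Type*} [NormedAddCommGroup E] [NormedSpace ℝ E]
    [FiniteDimensional ℝ E] [MeasurableSpace E] [BorelSpace E] {μ : Measure E}
    [μ.IsAddHaarMeasure] {H : E → ℝ} (hH : ContDiff ℝ 1 H) (hHc : HasCompactSupport H)
    (v : E) : ∫ x, fderiv ℝ H x v ∂μ = 0 := by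
  have hH' : Continuous fun x => fderiv ℝ H x v :=
    (hH.continuous_fderiv one_ne_zero).clm_apply continuous_const
  simpa using integral_mul_fderiv_eq_neg_fderiv_mul_of_integrable (μ := μ)
    (f := fun _ => (1 : ℝ)) (g := H) (v := v) (by simp)
    (by simpa using hH'.integrable_of_hasCompactSupport (hHc.fderiv_apply ℝ v))
    (by simpa using hH.continuous.integrable_of_hasCompactSupport hHc)
    (fun _ _ => differentiableAt_const _) (fun x _ => hH.differentiable one_ne_zero x)

section Divergence

variable {d : ℕ} {F : Fin d → (Fin d → ℝ) → ℝ}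

lemma integral_mul_divergence_add_eq_zero {H : (Fin d → ℝ) → ℝ} (hH : ContDiff ℝ 1 H)
    (hHc : HasCompactSupport H) (hF : ∀ j, ContDiff ℝ 1 (F j)) :
    ∫ x, (H x * divergence F x + ∑ j, F j x * grad H x j) = 0 := by
  have hHF (j : Fin d) : ContDiff ℝ 1 fun y => H y * F j y := hH.mul (hF j)
  have hprod (x : Fin d → ℝ) : H x * divergence F x + ∑ j, F j x * grad H x j
      = ∑ j, grad (fun y => H y * F j y) x j := by
    simp [divergence, grad_mul (hH.differentiable one_ne_zero x)
      ((hF _).differentiable one_ne_zero x), Finset.mul_sum, Finset.sum_add_distrib]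
  simp_rw [hprod]
  rw [integral_finsetSum _ fun j _ =>
    ((hHF j).continuous_grad_apply j).integrable_of_hasCompactSupport
      (hHc.mul_right.fderiv_apply ℝ _)]
  exact Finset.sum_eq_zero fun j _ => integral_fderiv_apply_eq_zero (hHF j) hHc.mul_right _

lemma norm_radialCutoff_mul_divergence_add_le {R C : ℝ}
    (hC : ∀ (x : Fin d → ℝ) j, |grad (radialCutoff R) x j| ≤ C * (|x j| / (1 + x ⬝ᵥ x)))
    (x : Fin d → ℝ) :
    ‖radialCutoff R x * divergence F x + ∑ j, F j x * grad (radialCutoff R) x j‖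
      ≤ ‖divergence F x‖ + ∑ j, C * ‖x j * F j x / (1 + x ⬝ᵥ x)‖ := by
  have hx0 : 0 < 1 + x ⬝ᵥ x := by linarith [dotProduct_self_nonneg x]
  refine (norm_add_le _ _).trans (add_le_add ?_ ((norm_sum_le _ _).trans
    (Finset.sum_le_sum fun j _ => ?_)))
  · rw [norm_mul]
    exact mul_le_of_le_one_left (norm_nonneg _) (abs_radialCutoff_le_one _ _)
  · rw [norm_mul, Real.norm_eq_abs, Real.norm_eq_abs, Real.norm_eq_abs, abs_div, abs_mul,
      abs_of_pos hx0]
    calc |F j x| * |grad (radialCutoff R) x j|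
        ≤ |F j x| * (C * (|x j| / (1 + x ⬝ᵥ x))) := by gcongr; exact hC x j
      _ = C * (|x j| * |F j x| / (1 + x ⬝ᵥ x)) := by ring

theorem integral_divergence_eq_zero (hF : ∀ j, ContDiff ℝ 1 (F j))
    (hdiv : Integrable (divergence F))
    (hgrowth : ∀ j, Integrable fun x => x j * F j x / (1 + x ⬝ᵥ x)) :
    ∫ x, divergence F x = 0 := by
  obtain ⟨C, hC⟩ := exists_abs_grad_radialCutoff_le (d := d)
  let R : ℕ → ℝ := fun n => n + 1
  have hR (n : ℕ) : 1 ≤ R n := by simp [R]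
  let G (n : ℕ) (x : Fin d → ℝ) : ℝ :=
    radialCutoff (R n) x * divergence F x + ∑ j, F j x * grad (radialCutoff (R n)) x j
  have hG_meas (n : ℕ) : AEStronglyMeasurable (G n) :=
    ((contDiff_radialCutoff _).continuous.aestronglyMeasurable.mul hdiv.1).add
      (continuous_finsetSum _ fun j _ => (hF j).continuous.mul
        ((contDiff_radialCutoff _).continuous_grad_apply j)).aestronglyMeasurable
  have hG_bound (n : ℕ) (x : Fin d → ℝ) :
      ‖G n x‖ ≤ ‖divergence F x‖ + ∑ j, C * ‖x j * F j x / (1 + x ⬝ᵥ x)‖ :=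
    norm_radialCutoff_mul_divergence_add_le (hC _ (hR n)) x
  have hG_lim (x : Fin d → ℝ) : Tendsto (fun n => G n x) atTop (nhds (divergence F x)) := by
    refine tendsto_const_nhds.congr' ?_
    filter_upwards [eventually_ge_atTop ⌈x ⬝ᵥ x⌉₊] with n hn
    have hxn : x ⬝ᵥ x < R n := by
      have := (Nat.le_ceil (x ⬝ᵥ x)).trans (Nat.cast_le.mpr hn)
      simp only [R]
      linarith
    simp [G, radialCutoff_eq_one (by linarith [hR n]) hxn.le,
      grad_radialCutoff_eq_zero (by linarith [hR n]) hxn]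
  have hG_int (n : ℕ) : ∫ x, G n x = 0 :=
    integral_mul_divergence_add_eq_zero (contDiff_radialCutoff _)
      (hasCompactSupport_radialCutoff (by linarith [hR n])) hF
  have hlim := tendsto_integral_of_dominated_convergence _ hG_meas
    (hdiv.norm.add (integrable_finsetSum _ fun j _ => (hgrowth j).norm.const_mul C))
    (fun n => ae_of_all _ (hG_bound n)) (ae_of_all _ hG_lim)
  simp only [hG_int] at hlim
  exact tendsto_nhds_unique tendsto_const_nhds hlim |>.symm

end Divergence

section Student

variable {d : ℕ} {k : ℝ}

def steinMatrix (k : ℝ) (x : Fin d → ℝ) : Matrix (Fin d) (Fin d) ℝ := vecMulVec x x + k • 1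

lemma steinMatrix_apply (k : ℝ) (x : Fin d → ℝ) (i j : Fin d) :
    steinMatrix k x i j = x i * x j + k * (1 : Matrix (Fin d) (Fin d) ℝ) i j := by
  simp [steinMatrix, vecMulVec_apply]

lemma steinMatrix_mulVec_self (k : ℝ) (x : Fin d → ℝ) :
    steinMatrix k x *ᵥ x = (x ⬝ᵥ x + k) • x := by
  simp [steinMatrix, add_mulVec, vecMulVec_mulVec, smul_mulVec, add_smul]

lemma contDiff_steinMatrix_apply (k : ℝ) (i j : Fin d) :
    ContDiff ℝ 1 fun y => steinMatrix k y i j := by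
  simp only [steinMatrix_apply]
  fun_prop

lemma divergence_steinMatrix_row (k : ℝ) (i : Fin d) (x : Fin d → ℝ) :
    divergence (fun j y => steinMatrix k y i j) x = (d + 1) * x i := by
  have h (j : Fin d) : grad (fun y => steinMatrix k y i j) x j
      = x i + x j * Pi.single (M := fun _ => ℝ) j 1 i := by
    simp only [grad, steinMatrix_apply]
    rw [fderiv_add_const, fderiv_fun_mul (differentiableAt_apply i x) (differentiableAt_apply j x),
      (hasFDerivAt_apply i x).fderiv, (hasFDerivAt_apply j x).fderiv]
    simp
  simp only [divergence, h, Pi.single_apply, mul_ite, mul_one, mul_zero, Finset.sum_add_distrib,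
    Finset.sum_const, Finset.card_univ, Fintype.card_fin, nsmul_eq_mul, Finset.sum_ite_eq,
    Finset.mem_univ, ↓reduceIte]
  ring

lemma abs_steinMatrix_apply_div_le (hk : 0 ≤ k) (x : Fin d → ℝ) (i j : Fin d) :
    |steinMatrix k x i j / (1 + x ⬝ᵥ x)| ≤ 1 + k := by
  have hx0 : 0 < 1 + x ⬝ᵥ x := by linarith [dotProduct_self_nonneg x]
  have hij : |x i * x j| ≤ x ⬝ᵥ x := by
    rw [abs_le]
    constructor <;> nlinarith [sq_le_dotProduct_self x i, sq_le_dotProduct_self x j]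
  have hδ : |k * (1 : Matrix (Fin d) (Fin d) ℝ) i j| ≤ k := by
    rw [one_apply]
    split_ifs <;> simp [abs_of_nonneg hk, hk]
  rw [abs_div, abs_of_pos hx0, div_le_iff₀ hx0]
  calc |steinMatrix k x i j| ≤ |x i * x j| + |k * (1 : Matrix (Fin d) (Fin d) ℝ) i j| := by
        rw [steinMatrix_apply]
        exact abs_add_le _ _
    _ ≤ (1 + k) * (1 + x ⬝ᵥ x) := by nlinarith [dotProduct_self_nonneg x]

lemma Integrable.steinMatrix_mul_div (hk : 0 ≤ k) {G : (Fin d → ℝ) → ℝ} {i j : Fin d}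
    (hG : Integrable fun x => x j * G x) :
    Integrable fun x => x j * (steinMatrix k x i j * G x) / (1 + x ⬝ᵥ x) := by
  have hcont : Continuous fun x => steinMatrix k x i j / (1 + x ⬝ᵥ x) :=
    (contDiff_steinMatrix_apply k i j).continuous.div
      (continuous_const.add (contDiff_dotProduct_self (n := 1)).continuous)
      fun x => by linarith [dotProduct_self_nonneg x]
  refine (hG.bdd_mul hcont.aestronglyMeasurable
    (ae_of_all _ fun x => abs_steinMatrix_apply_div_le hk x i j)).congr (ae_of_all _ fun x => ?_)
  ring

lemma contDiff_studentDensity₀ (hk : 0 < k) : ContDiff ℝ 1 (studentDensity₀ d k) := by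
  have hq (x : Fin d → ℝ) : 1 + x ⬝ᵥ x / k ≠ 0 := by
    have := dotProduct_self_nonneg x
    positivity
  exact contDiff_const.mul
    ((contDiff_const.add (contDiff_dotProduct_self.div_const k)).rpow_const_of_ne hq)

lemma grad_studentDensity₀ (hk : 0 < k) (x : Fin d → ℝ) :
    grad (studentDensity₀ d k) x
      = (-(k + d) / (k + x ⬝ᵥ x) * studentDensity₀ d k x) • x := by
  have hx := dotProduct_self_nonneg x
  have hq : 0 < 1 + x ⬝ᵥ x / k := by positivity
  have hφ := ((((hasDerivAt_id (x ⬝ᵥ x)).div_const k).const_add 1).rpow_const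
    (p := -((k + d) / 2)) (Or.inl hq.ne')).const_mul
    (Real.Gamma ((k + d) / 2) / (Real.Gamma (k / 2) * k ^ ((d : ℝ) / 2) * π ^ ((d : ℝ) / 2)))
  refine (grad_radial hφ).trans ?_
  congr 1
  simp only [studentDensity₀, id]
  rw [Real.rpow_sub_one hq.ne']
  field_simp

lemma divergence_steinMatrix_mul_studentDensity₀ (hk : 0 < k) {g : (Fin d → ℝ) → ℝ}
    (hg : Differentiable ℝ g) (i : Fin d) (x : Fin d → ℝ) :
    divergence (fun j y => steinMatrix k y i j * (g y * studentDensity₀ d k y)) x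
      = (steinMatrix k x *ᵥ grad g x) i * studentDensity₀ d k x
        + (1 - k) * (x i * g x * studentDensity₀ d k x) := by
  set p := studentDensity₀ d k
  have hp : Differentiable ℝ p := (contDiff_studentDensity₀ hk).differentiable one_ne_zero
  have hA (j : Fin d) : DifferentiableAt ℝ (fun y => steinMatrix k y i j) x :=
    (contDiff_steinMatrix_apply k i j).differentiable one_ne_zero x
  have hx : 0 < k + x ⬝ᵥ x := by linarith [dotProduct_self_nonneg x]
  calc divergence (fun j y => steinMatrix k y i j * (g y * p y)) x
      = (steinMatrix k x *ᵥ grad (fun y => g y * p y) x) i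
          + g x * p x * divergence (fun j y => steinMatrix k y i j) x := by
        simp only [divergence, mulVec, dotProduct, Finset.mul_sum, ← Finset.sum_add_distrib]
        refine Finset.sum_congr rfl fun j _ => ?_
        rw [grad_mul (b := fun y => g y * p y) (hA j) ((hg x).mul (hp x))]
        simp only [Pi.add_apply, Pi.smul_apply, smul_eq_mul]
    _ = (steinMatrix k x *ᵥ grad g x) i * p x + (1 - k) * (x i * g x * p x) := by
        rw [divergence_steinMatrix_row, grad_mul (hg x) (hp x), grad_studentDensity₀ hk,
          mulVec_add, mulVec_smul, mulVec_smul, mulVec_smul, steinMatrix_mulVec_self]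
        simp only [neg_add_rev, Pi.add_apply, Pi.smul_apply, smul_eq_mul]
        field_simp
        ring

end Student

end

theorem student_stein_identity_general (d : ℕ) (k : ℝ) (hk : 2 < k)
    (g : (Fin d → ℝ) → ℝ) (hg : ContDiff ℝ 1 g)
    (hint₁ : ∀ i, Integrable (fun x =>
      ((Matrix.vecMulVec x x + k • (1 : Matrix (Fin d) (Fin d) ℝ)).mulVec (grad g x)) i *
        studentDensity₀ d k x))
    (hint₂ : ∀ i, Integrable (fun x => x i * g x * studentDensity₀ d k x)) :
    ∀ i, ∫ x,
        ((Matrix.vecMulVec x x + k • (1 : Matrix (Fin d) (Fin d) ℝ)).mulVec (grad g x)) i *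
          studentDensity₀ d k x
      = (k - 1) * ∫ x, x i * g x * studentDensity₀ d k x := by
  intro i
  have hk0 : 0 < k := by linarith
  have hdiv : divergence (fun j y => steinMatrix k y i j * (g y * studentDensity₀ d k y))
      = fun x => ((Matrix.vecMulVec x x + k • (1 : Matrix (Fin d) (Fin d) ℝ)).mulVec
          (grad g x)) i * studentDensity₀ d k x + (1 - k) * (x i * g x * studentDensity₀ d k x) :=
    funext (divergence_steinMatrix_mul_studentDensity₀ hk0 (hg.differentiable one_ne_zero) i)
  have hzero := integral_divergence_eq_zero
    (fun j => (contDiff_steinMatrix_apply k i j).mul (hg.mul (contDiff_studentDensity₀ hk0)))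
    (hdiv ▸ (hint₁ i).add ((hint₂ i).const_mul _))
    (fun j => Integrable.steinMatrix_mul_div hk0.le (by simpa only [mul_assoc] using hint₂ j))
  rw [hdiv, integral_add (hint₁ i) ((hint₂ i).const_mul _), integral_const_mul] at hzero
  linarith

/-- For `X ~ t_k(0, I_d)` with `k > 2` and `g` continuously differentiable such that
`(1+|x|²)^{-(k+d-2)/2} g(x) → 0` at infinity and the relevant integrals are finite,
`E[(X Xᵀ + k I_d) ∇g(X)] = (k-1) E[X g(X)]`. -/
theorem student_stein_identity (d : ℕ) (hd : 1 ≤ d) (k : ℝ) (hk : 2 < k)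
    (g : (Fin d → ℝ) → ℝ) (hg : ContDiff ℝ 1 g)
    (hdecay : Tendsto (fun x : Fin d → ℝ =>
        (1 + ∑ j, x j ^ 2) ^ (-((k + d - 2) / 2)) * g x) (cocompact _) (nhds 0))
    (hint₁ : ∀ i, Integrable (fun x =>
      ((Matrix.vecMulVec x x + k • (1 : Matrix (Fin d) (Fin d) ℝ)).mulVec (grad g x)) i *
        studentDensity₀ d k x))
    (hint₂ : ∀ i, Integrable (fun x => x i * g x * studentDensity₀ d k x)) :
    ∀ i, ∫ x,
        ((Matrix.vecMulVec x x + k • (1 : Matrix (Fin d) (Fin d) ℝ)).mulVec (grad g x)) i *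
          studentDensity₀ d k x
      = (k - 1) * ∫ x, x i * g x * studentDensity₀ d k x :=
  student_stein_identity_general d k hk g hg hint₁ hint₂
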